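/- arXiv:1004.0056 — 9 statements merged into one kernel-verified Lean document; each statement's English description precedes it below -/
import Mathlib

section
/- Let (X,◁) be a stratified poset, i.e., ◁ is a strict partial order such that the incomparability relation ≃ (defined by α ≃ β iff ¬(α ◁ β) and ¬(β ◁ α)) is an equivalence relation. Define ◁⌢ by α ◁⌢ β iff α ◁ β or (α ≃ β and α ≠ β). Then (X, ◁, ◁⌢) is a stratified order structure. -/
/-!
A stratified order is exactly a strict weak order, and for such an order `◁` the relation `◁⌢`
is just `α ≠ β ∧ ¬ β ◁ α`. The axioms of a stratified order structure then reduce to negative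
transitivity of `◁`, i.e. `α ◁ γ → α ◁ β ∨ β ◁ γ`.
-/

section

variable {α : Type*} {r : α → α → Prop}

theorem IsStrictWeakOrder.isOrderConnected [IsStrictWeakOrder α r] : IsOrderConnected α r where
  conn a b c hac := by
    by_contra! ⟨hab, hbc⟩
    have hab' : IncompRel r a b := ⟨hab, fun hba => hbc (_root_.trans hba hac)⟩
    have hbc' : IncompRel r b c := ⟨hbc, fun hcb => hab (_root_.trans hac hcb)⟩
    exact (IsStrictWeakOrder.incomp_trans a b c hab' hbc').1 hac

theorem lt_or_incompRel_and_ne_iff [IsStrictOrder α r] {a b : α} :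
    r a b ∨ (IncompRel r a b ∧ a ≠ b) ↔ a ≠ b ∧ ¬ r b a := by
  constructor
  · rintro (hab | ⟨hab, hne⟩)
    · exact ⟨ne_of_irrefl hab, asymm hab⟩
    · exact ⟨hne, hab.2⟩
  · rintro ⟨hne, hba⟩
    by_cases hab : r a b
    · exact .inl hab
    · exact .inr ⟨⟨hab, hba⟩, hne⟩

end

/-- A stratified poset `(X,◁)` yields a stratified order structure `(X, ◁, ◁⌢)`. -/
theorem stratified_order_gives_sos {X : Type*} (lt : X → X → Prop)
    (hirr : ∀ a, ¬ lt a a)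
    (htrans : ∀ a b c, lt a b → lt b c → lt a c)
    (hequiv : Equivalence (fun a b => ¬ lt a b ∧ ¬ lt b a)) :
    -- define ◁⌢ : α ◁⌢ β iff α ◁ β or (α ≃ β and α ≠ β)
    (let wk : X → X → Prop := fun a b => lt a b ∨ ((¬ lt a b ∧ ¬ lt b a) ∧ a ≠ b)
     (∀ a, ¬ wk a a) ∧
     (∀ a b, lt a b → wk a b) ∧
     (∀ a b c, wk a b → wk b c → a ≠ c → wk a c) ∧
     (∀ a b c, (wk a b ∧ lt b c) ∨ (lt a b ∧ wk b c) → lt a c)) := by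
  intro wk
  have : IsStrictWeakOrder X lt :=
    { irrefl := hirr, trans := htrans, incomp_trans := fun _ _ _ => hequiv.trans }
  have := IsStrictWeakOrder.isOrderConnected (r := lt)
  have hwk : ∀ a b, wk a b ↔ a ≠ b ∧ ¬ lt b a := fun _ _ => lt_or_incompRel_and_ne_iff
  simp only [hwk]
  refine ⟨fun a h => h.1 rfl, fun a b h => ⟨ne_of_irrefl h, asymm h⟩,
    fun a b c hab hbc hac => ⟨hac, IsOrderConnected.neg_trans hbc.2 hab.2⟩, ?_⟩
  rintro a b c (⟨hab, hbc⟩ | ⟨hab, hbc⟩)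
  · exact (IsOrderConnected.conn b a c hbc).resolve_left hab.2
  · exact (IsOrderConnected.conn a c b hab).resolve_right hbc.2
end

section
/- Let (X,≺,⊏) be a stratified order structure and ≡_⊏ the equivalence relation defined by α ≡_⊏ β iff α = β or (α ⊏ β ∧ β ⊏ α). Define relations on the quotient X/≡_⊏ by [α] ≺̂ [β] iff (∃ a ∈ [α], b ∈ [β], a ≺ b) and [α] ⊏̂ [β] iff (∃ a ∈ [α], b ∈ [β], a ⊏ b). Then for all α, β ∈ X: α ≺ β iff [α] ≺̂ [β]. -/
section
variable {X : Type*} {prec wk : X → X → Prop}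
  (hS4 : ∀ a b c, (wk a b ∧ prec b c) ∨ (prec a b ∧ wk b c) → prec a c)
include hS4

theorem prec_of_eq_or_wk_of_prec {α a b : X} (hαa : α = a ∨ wk α a)
    (hab : prec a b) : prec α b := by
  rcases hαa with rfl | hαa
  · exact hab
  · exact hS4 α a b (Or.inl ⟨hαa, hab⟩)

theorem prec_of_prec_of_eq_or_wk {α β b : X} (hbβ : b = β ∨ wk b β)
    (hαb : prec α b) : prec α β := by
  rcases hbβ with rfl | hbβ
  · exact hαb
  · exact hS4 α b β (Or.inr ⟨hαb, hbβ⟩)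

end

theorem sos_quotient_prec_iff_general {X : Type*} (prec wk : X → X → Prop)
    (hS4 : ∀ a b c, (wk a b ∧ prec b c) ∨ (prec a b ∧ wk b c) → prec a c) :
    (let E : X → X → Prop := fun a b => a = b ∨ (wk a b ∧ wk b a)
     ∀ α β, prec α β ↔ ∃ a b, E α a ∧ E β b ∧ prec a b) := by
  intro E α β
  refine ⟨fun h => ⟨α, β, Or.inl rfl, Or.inl rfl, h⟩, ?_⟩
  rintro ⟨a, b, hαa, hβb, hab⟩
  exact prec_of_prec_of_eq_or_wk hS4 (hβb.imp Eq.symm And.right)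
    (prec_of_eq_or_wk_of_prec hS4 (hαa.imp id And.left) hab)

/-- `α ≺ β` iff `[α] ≺̂ [β]` in the quotient by the ⊏-cycle equivalence, where
`[α] ≺̂ [β]` holds iff some representatives of the classes are ≺-related. -/
theorem sos_quotient_prec_iff {X : Type*} (prec wk : X → X → Prop)
    (hS1 : ∀ a, ¬ wk a a)
    (hS2 : ∀ a b, prec a b → wk a b)
    (hS3 : ∀ a b c, wk a b → wk b c → a ≠ c → wk a c)
    (hS4 : ∀ a b c, (wk a b ∧ prec b c) ∨ (prec a b ∧ wk b c) → prec a c) :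
    (let E : X → X → Prop := fun a b => a = b ∨ (wk a b ∧ wk b a)
     ∀ α β, prec α β ↔ ∃ a b, E α a ∧ E β b ∧ prec a b) :=
  sos_quotient_prec_iff_general prec wk hS4
end

section
/- Let (X,≺,⊏) be a stratified order structure and ≡_⊏ the ⊏-cycle equivalence (α ≡_⊏ β iff α = β or α ⊏ β ⊏ α). Define [α] ⊏̂ [β] iff some a ∈ [α] and b ∈ [β] satisfy a ⊏ b. Then for all α, β ∈ X: α ⊏ β iff ([α] ⊏̂ [β]) or (α ≠ β and [α] = [β]). -/
/-!
A relation `a ⊏ b` between representatives `a ≡ α`, `b ≡ β` passes to `α ⊏ β` whenever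
`α ≠ β`: transitivity moves it along the cycles `α ⊏ a ⊏ α` and `b ⊏ β ⊏ b`, and the side
condition of transitivity fails only when the two ends already coincide, in which case
`α ≡ β` with `α ≠ β` gives `α ⊏ β` directly. Conversely `α ⊏ β` is witnessed by `α, β`
themselves, and irreflexivity gives `α ≠ β`.
-/

def CycleEquiv {X : Type*} (r : X → X → Prop) (a b : X) : Prop :=
  a = b ∨ (r a b ∧ r b a)

namespace CycleEquiv

variable {X : Type*} {r : X → X → Prop} {a b α β : X}

theorem rel_of_ne (h : CycleEquiv r a b) (hne : a ≠ b) : r a b :=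
  h.resolve_left hne |>.1

theorem symm (h : CycleEquiv r a b) : CycleEquiv r b a :=
  h.imp Eq.symm And.symm

variable (htrans : ∀ a b c, r a b → r b c → a ≠ c → r a c)
include htrans

theorem rel_left (hα : CycleEquiv r α a) (hab : r a b) (hne : α ≠ b) : r α b := by
  rcases hα with rfl | ⟨hαa, -⟩
  · exact hab
  · exact htrans _ _ _ hαa hab hne

theorem rel_right (hβ : CycleEquiv r β b) (hαb : r α b) (hne : α ≠ β) : r α β := by
  rcases hβ with rfl | ⟨-, hbβ⟩
  · exact hαb
  · exact htrans _ _ _ hαb hbβ hne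

theorem rel_of_rel (hα : CycleEquiv r α a) (hβ : CycleEquiv r β b) (hab : r a b)
    (hne : α ≠ β) : r α β := by
  by_cases hαb : α = b
  · subst hαb
    exact hβ.symm.rel_of_ne hne
  · exact rel_right htrans hβ (rel_left htrans hα hab hαb) hne

end CycleEquiv

theorem sos_quotient_wk_iff_general {X : Type*} (wk : X → X → Prop)
    (hS1 : ∀ a, ¬ wk a a)
    (hS3 : ∀ a b c, wk a b → wk b c → a ≠ c → wk a c) :
    (let E : X → X → Prop := fun a b => a = b ∨ (wk a b ∧ wk b a)
     ∀ α β, wk α β ↔ ((∃ a b, E α a ∧ E β b ∧ wk a b) ∧ ¬ E α β) ∨ (α ≠ β ∧ E α β)) := by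
  intro E α β
  constructor
  · intro h
    by_cases hE : E α β
    · exact Or.inr ⟨fun hαβ => hS1 α (hαβ ▸ h), hE⟩
    · exact Or.inl ⟨⟨α, β, Or.inl rfl, Or.inl rfl, h⟩, hE⟩
  · rintro (⟨⟨a, b, hα, hβ, hab⟩, hnE⟩ | ⟨hne, hE⟩)
    · exact CycleEquiv.rel_of_rel hS3 hα hβ hab fun hαβ => hnE (Or.inl hαβ)
    · exact CycleEquiv.rel_of_ne hE hne

/-- `α ⊏ β` iff `[α] ⊏̂ [β]` or (`α ≠ β` and `[α] = [β]`), for the quotient by the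
⊏-cycle equivalence. -/
theorem sos_quotient_wk_iff {X : Type*} (prec wk : X → X → Prop)
    (hS1 : ∀ a, ¬ wk a a)
    (hS2 : ∀ a b, prec a b → wk a b)
    (hS3 : ∀ a b c, wk a b → wk b c → a ≠ c → wk a c)
    (hS4 : ∀ a b c, (wk a b ∧ prec b c) ∨ (prec a b ∧ wk b c) → prec a c) :
    (let E : X → X → Prop := fun a b => a = b ∨ (wk a b ∧ wk b a)
     ∀ α β, wk α β ↔ ((∃ a b, E α a ∧ E β b ∧ wk a b) ∧ ¬ E α β) ∨ (α ≠ β ∧ E α β)) :=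
  sos_quotient_wk_iff_general wk hS1 hS3
end

section
/- Let (X,≺,⊏) be a stratified order structure, ≡_⊏ its ⊏-cycle equivalence, and ≺̂, ⊏̂ the induced relations on the quotient X/≡_⊏ (via existence of related representatives). Then (X/≡_⊏, ≺̂, ⊏̂) is again a stratified order structure. -/
/-! Every relation involved is invariant under `≡_⊏` in each argument: `S3` moves `⊏` and `S4`
moves `≺` along a `⊏`-cycle (the proviso `α ≠ γ` of `S3` is met as long as the two classes
differ). So `≺̂` and `⊏̂` may be evaluated on any chosen representatives, where the axioms of
`(X, ≺, ⊏)` apply directly. -/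

namespace StratifiedOrder

variable {X : Type*} {prec wk : X → X → Prop}

def CycleEquiv (wk : X → X → Prop) (a b : X) : Prop := a = b ∨ (wk a b ∧ wk b a)

theorem CycleEquiv.symm {a b : X} : CycleEquiv wk a b → CycleEquiv wk b a
  | .inl h => .inl h.symm
  | .inr ⟨hab, hba⟩ => .inr ⟨hba, hab⟩

theorem wk_of_cycleEquiv_left (hS3 : ∀ a b c, wk a b → wk b c → a ≠ c → wk a c)
    {α a b : X} (hα : CycleEquiv wk α a) (hab : wk a b) (hne : α ≠ b) : wk α b := by
  rcases hα with rfl | ⟨hαa, -⟩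
  · exact hab
  · exact hS3 _ _ _ hαa hab hne

theorem wk_of_cycleEquiv_right (hS3 : ∀ a b c, wk a b → wk b c → a ≠ c → wk a c)
    {β a b : X} (hβ : CycleEquiv wk β b) (hab : wk a b) (hne : a ≠ β) : wk a β := by
  rcases hβ with rfl | ⟨-, hbβ⟩
  · exact hab
  · exact hS3 _ _ _ hab hbβ hne

theorem wk_of_cycleEquiv (hS3 : ∀ a b c, wk a b → wk b c → a ≠ c → wk a c)
    {α β a b : X} (hα : CycleEquiv wk α a) (hβ : CycleEquiv wk β b) (hab : wk a b)
    (hαβ : ¬ CycleEquiv wk α β) : wk α β := by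
  have hαb : wk α b := by
    refine wk_of_cycleEquiv_left hS3 hα hab ?_
    rintro rfl
    exact hαβ hβ.symm
  exact wk_of_cycleEquiv_right hS3 hβ hαb fun h => hαβ (.inl h)

theorem prec_of_cycleEquiv (hS4 : ∀ a b c, (wk a b ∧ prec b c) ∨ (prec a b ∧ wk b c) → prec a c)
    {α β a b : X} (hα : CycleEquiv wk α a) (hβ : CycleEquiv wk β b) (hab : prec a b) :
    prec α β := by
  have hαb : prec α b := by
    rcases hα with rfl | ⟨hαa, -⟩
    · exact hab
    · exact hS4 _ _ _ (.inl ⟨hαa, hab⟩)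
  rcases hβ with rfl | ⟨-, hbβ⟩
  · exact hαb
  · exact hS4 _ _ _ (.inr ⟨hαb, hbβ⟩)

theorem not_cycleEquiv_of_prec (hS1 : ∀ a, ¬ wk a a) (hS2 : ∀ a b, prec a b → wk a b)
    (hS4 : ∀ a b c, (wk a b ∧ prec b c) ∨ (prec a b ∧ wk b c) → prec a c)
    {a b : X} (hab : prec a b) : ¬ CycleEquiv wk a b := by
  rintro (rfl | ⟨-, hba⟩)
  · exact hS1 a (hS2 a a hab)
  · exact hS1 a (hS2 a a (hS4 _ _ _ (.inr ⟨hab, hba⟩)))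

end StratifiedOrder

open StratifiedOrder

/-- Classes are handled through representatives: `[α] = [γ]` is `E α γ`. -/
theorem sos_quotient_is_sos {X : Type*} (prec wk : X → X → Prop)
    (hS1 : ∀ a, ¬ wk a a)
    (hS2 : ∀ a b, prec a b → wk a b)
    (hS3 : ∀ a b c, wk a b → wk b c → a ≠ c → wk a c)
    (hS4 : ∀ a b c, (wk a b ∧ prec b c) ∨ (prec a b ∧ wk b c) → prec a c) :
    (let E : X → X → Prop := fun a b => a = b ∨ (wk a b ∧ wk b a)
     let hprec : X → X → Prop := fun α β => ∃ a b, E α a ∧ E β b ∧ prec a b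
     let hwk : X → X → Prop := fun α β => (∃ a b, E α a ∧ E β b ∧ wk a b) ∧ ¬ E α β
     (∀ α, ¬ hwk α α) ∧
     (∀ α β, hprec α β → hwk α β) ∧
     (∀ α β γ, hwk α β → hwk β γ → ¬ E α γ → hwk α γ) ∧
     (∀ α β γ, (hwk α β ∧ hprec β γ) ∨ (hprec α β ∧ hwk β γ) → hprec α γ)) := by
  intro E hprec hwk
  have hwk_iff {α β : X} : hwk α β ↔ wk α β ∧ ¬ E α β :=
    ⟨fun ⟨⟨_, _, hα, hβ, hab⟩, hαβ⟩ => ⟨wk_of_cycleEquiv hS3 hα hβ hab hαβ, hαβ⟩,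
      fun ⟨hαβ, hne⟩ => ⟨⟨α, β, .inl rfl, .inl rfl, hαβ⟩, hne⟩⟩
  have hprec_iff {α β : X} : hprec α β ↔ prec α β :=
    ⟨fun ⟨_, _, hα, hβ, hab⟩ => prec_of_cycleEquiv hS4 hα hβ hab,
      fun h => ⟨α, β, .inl rfl, .inl rfl, h⟩⟩
  refine ⟨fun α h => h.2 (.inl rfl), fun α β h => ?_, fun α β γ h₁ h₂ hαγ => ?_, ?_⟩
  · have hαβ := hprec_iff.1 h
    exact hwk_iff.2 ⟨hS2 _ _ hαβ, not_cycleEquiv_of_prec hS1 hS2 hS4 hαβ⟩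
  · exact hwk_iff.2 ⟨hS3 _ _ _ (hwk_iff.1 h₁).1 (hwk_iff.1 h₂).1 (fun h => hαγ (.inl h)), hαγ⟩
  · rintro α β γ (⟨h₁, h₂⟩ | ⟨h₁, h₂⟩)
    · exact hprec_iff.2 (hS4 _ _ _ (.inl ⟨(hwk_iff.1 h₁).1, hprec_iff.1 h₂⟩))
    · exact hprec_iff.2 (hS4 _ _ _ (.inr ⟨hprec_iff.1 h₁, (hwk_iff.1 h₂).1⟩))
end

section
/- Let R₁, R₂ be binary relations on X and let S◊ = (X, P, Q) with P := (R₁∪R₂)* ∘ R₁ ∘ (R₁∪R₂)* and Q := (R₁∪R₂)* \ id. Then applying the ◊-closure operation to S◊ again yields S◊; i.e., (P∪Q)* ∘ P ∘ (P∪Q)* = P and (P∪Q)* \ id = Q (the ◊-closure is idempotent). -/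
/-! Both `P` and `Q` lie inside `(R₁ ∪ R₂)*`, and every nontrivial `(R₁ ∪ R₂)`-step is a `Q`-step,
so `(P ∪ Q)* = (R₁ ∪ R₂)*`. Hence `Q` is reproduced verbatim, and `P` already absorbs
`(R₁ ∪ R₂)*` on both sides. -/

namespace Relation

variable {α : Type*} {r s : α → α → Prop}

theorem reflTransGen_mono_of_ne (h : ∀ a b, r a b → a ≠ b → s a b) :
    ReflTransGen r ≤ ReflTransGen s :=
  reflTransGen_closed fun a b hab => by
    by_cases hab_eq : a = b
    · exact hab_eq ▸ ReflTransGen.refl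
    · exact ReflTransGen.single (h a b hab hab_eq)

theorem comp_reflTransGen_le_reflTransGen (h : s ≤ ReflTransGen r) :
    Comp (Comp (ReflTransGen r) s) (ReflTransGen r) ≤ ReflTransGen r := by
  rintro a b ⟨c, ⟨d, had, hdc⟩, hcb⟩
  exact (had.trans (h d c hdc)).trans hcb

theorem reflTransGen_comp_absorb :
    Comp (Comp (ReflTransGen r) (Comp (Comp (ReflTransGen r) s) (ReflTransGen r))) (ReflTransGen r) =
      Comp (Comp (ReflTransGen r) s) (ReflTransGen r) := by
  ext a b
  constructor
  · rintro ⟨c, ⟨d, had, e, ⟨f, hdf, hfe⟩, hec⟩, hcb⟩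
    exact ⟨e, ⟨f, had.trans hdf, hfe⟩, hec.trans hcb⟩
  · intro h
    exact ⟨b, ⟨a, ReflTransGen.refl, h⟩, ReflTransGen.refl⟩

end Relation

/-- The ◊-closure is idempotent. -/
theorem diamond_closure_idem {X : Type*} (R1 R2 : X → X → Prop) :
    (let U : X → X → Prop := fun a b => R1 a b ∨ R2 a b
     let P : X → X → Prop := Relation.Comp (Relation.Comp (Relation.ReflTransGen U) R1) (Relation.ReflTransGen U)
     let Q : X → X → Prop := fun a b => Relation.ReflTransGen U a b ∧ a ≠ b
     let U' : X → X → Prop := fun a b => P a b ∨ Q a b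
     let P' : X → X → Prop := Relation.Comp (Relation.Comp (Relation.ReflTransGen U') P) (Relation.ReflTransGen U')
     let Q' : X → X → Prop := fun a b => Relation.ReflTransGen U' a b ∧ a ≠ b
     (∀ a b, P' a b ↔ P a b) ∧ (∀ a b, Q' a b ↔ Q a b)) := by
  intro U P Q U' P' Q'
  have hP : P ≤ Relation.ReflTransGen U :=
    Relation.comp_reflTransGen_le_reflTransGen fun a b h => Relation.ReflTransGen.single (Or.inl h)
  have hU : Relation.ReflTransGen U' = Relation.ReflTransGen U :=
    le_antisymm (Relation.reflTransGen_closed fun a b h => h.elim (hP a b) And.left)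
      (Relation.reflTransGen_mono_of_ne fun a b h hne => Or.inr ⟨Relation.ReflTransGen.single h, hne⟩)
  refine ⟨fun a b => ?_, fun a b => ?_⟩
  · show Relation.Comp (Relation.Comp (Relation.ReflTransGen U') P) (Relation.ReflTransGen U') a b ↔ P a b
    rw [hU, Relation.reflTransGen_comp_absorb]
  · show Relation.ReflTransGen U' a b ∧ a ≠ b ↔ Q a b
    rw [hU]
end

section
/- Let R₁, R₂ be binary relations on X. The ◊-closure (X, (R₁∪R₂)*∘R₁∘(R₁∪R₂)*, (R₁∪R₂)* \ id) is a stratified order structure if and only if the relation (R₁∪R₂)* ∘ R₁ ∘ (R₁∪R₂)* is irreflexive. -/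
namespace Relation

variable {α : Type*} {u r : α → α → Prop} {a b c : α}

theorem reflTransGen_of_comp_comp (hru : ∀ x y, r x y → u x y)
    (h : Comp (Comp (ReflTransGen u) r) (ReflTransGen u) a b) : ReflTransGen u a b := by
  obtain ⟨z, ⟨w, haw, hwz⟩, hzb⟩ := h
  exact (haw.tail (hru w z hwz)).trans hzb

theorem ReflTransGen.trans_comp_comp (hab : ReflTransGen u a b)
    (hbc : Comp (Comp (ReflTransGen u) r) (ReflTransGen u) b c) :
    Comp (Comp (ReflTransGen u) r) (ReflTransGen u) a c := by
  obtain ⟨z, ⟨w, hbw, hwz⟩, hzc⟩ := hbc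
  exact ⟨z, ⟨w, hab.trans hbw, hwz⟩, hzc⟩

theorem comp_comp_reflTransGen_trans (hab : Comp (Comp (ReflTransGen u) r) (ReflTransGen u) a b)
    (hbc : ReflTransGen u b c) : Comp (Comp (ReflTransGen u) r) (ReflTransGen u) a c := by
  obtain ⟨z, hz, hzb⟩ := hab
  exact ⟨z, hz, hzb.trans hbc⟩

end Relation

open Relation

/-- The ◊-closure of `(X,R₁,R₂)` is a stratified order structure iff
`(R₁∪R₂)* ∘ R₁ ∘ (R₁∪R₂)*` is irreflexive. -/
theorem diamond_closure_sos_iff {X : Type*} (R1 R2 : X → X → Prop) :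
    (let U : X → X → Prop := fun a b => R1 a b ∨ R2 a b
     let P : X → X → Prop := Relation.Comp (Relation.Comp (Relation.ReflTransGen U) R1) (Relation.ReflTransGen U)
     let Q : X → X → Prop := fun a b => Relation.ReflTransGen U a b ∧ a ≠ b
     ((∀ a, ¬ Q a a) ∧
      (∀ a b, P a b → Q a b) ∧
      (∀ a b c, Q a b → Q b c → a ≠ c → Q a c) ∧
      (∀ a b c, (Q a b ∧ P b c) ∨ (P a b ∧ Q b c) → P a c))
     ↔ (∀ a, ¬ P a a)) := by
  intro U P Q
  constructor
  · rintro ⟨-, hPQ, -, -⟩ a hP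
    exact (hPQ a a hP).2 rfl
  · intro hirr
    refine ⟨fun a h => h.2 rfl,
      fun a b hab => ⟨reflTransGen_of_comp_comp (fun _ _ => Or.inl) hab, ?_⟩,
      fun a b c hab hbc hac => ⟨hab.1.trans hbc.1, hac⟩, ?_⟩
    · rintro rfl
      exact hirr a hab
    · rintro a b c (⟨hab, hbc⟩ | ⟨hab, hbc⟩)
      · exact hab.1.trans_comp_comp hbc
      · exact comp_comp_reflTransGen_trans hab hbc.1
end

section
/- If (X,≺,⊏) is a stratified order structure, then it equals its own ◊-closure: (X,≺,⊏) = (X, (≺∪⊏)*∘≺∘(≺∪⊏)*, (≺∪⊏)* \ id). -/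
open Relation

theorem eq_or_of_reflTransGen {X : Type*} {r w : X → X → Prop} (hrw : ∀ a b, r a b → w a b)
    (hw : ∀ a b c, w a b → w b c → a ≠ c → w a c) {a b : X} (h : ReflTransGen r a b) :
    a = b ∨ w a b := by
  induction h with
  | refl => exact .inl rfl
  | @tail c d _ hcd ih =>
    rcases ih with rfl | hac
    · exact .inr (hrw _ _ hcd)
    · by_cases had : a = d
      · exact .inl had
      · exact .inr (hw _ _ _ hac (hrw _ _ hcd) had)

/-- A stratified order structure is a fixed point of the ◊-closure. -/
theorem sos_diamond_fixed {X : Type*} (prec wk : X → X → Prop)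
    (hS1 : ∀ a, ¬ wk a a)
    (hS2 : ∀ a b, prec a b → wk a b)
    (hS3 : ∀ a b c, wk a b → wk b c → a ≠ c → wk a c)
    (hS4 : ∀ a b c, (wk a b ∧ prec b c) ∨ (prec a b ∧ wk b c) → prec a c) :
    (let U : X → X → Prop := fun a b => prec a b ∨ wk a b
     let P : X → X → Prop := Relation.Comp (Relation.Comp (Relation.ReflTransGen U) prec) (Relation.ReflTransGen U)
     let Q : X → X → Prop := fun a b => Relation.ReflTransGen U a b ∧ a ≠ b
     (∀ a b, P a b ↔ prec a b) ∧ (∀ a b, Q a b ↔ wk a b)) := by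
  intro U P Q
  have hU {a b : X} (h : ReflTransGen U a b) : a = b ∨ wk a b :=
    eq_or_of_reflTransGen (fun _ _ hab => hab.elim (hS2 _ _) id) hS3 h
  refine ⟨fun a b => ⟨?_, fun h => ⟨b, ⟨a, .refl, h⟩, .refl⟩⟩,
    fun a b => ⟨fun h => (hU h.1).resolve_left h.2, fun h => ⟨.single (.inr h), ?_⟩⟩⟩
  · rintro ⟨z, ⟨y, hay, hyz⟩, hzb⟩
    have haz : prec a z := (hU hay).elim (· ▸ hyz) fun hwk => hS4 _ _ _ (.inl ⟨hwk, hyz⟩)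
    exact (hU hzb).elim (· ▸ haz) fun hwk => hS4 _ _ _ (.inr ⟨haz, hwk⟩)
  · rintro rfl
    exact hS1 a h
end

section
/- Let S = (X,≺,⊏) be a stratified order structure and let R₁ ⊆ ≺ and R₂ ⊆ ⊏. Then the ◊-closure (X, (R₁∪R₂)*∘R₁∘(R₁∪R₂)*, (R₁∪R₂)* \ id) is a stratified order structure and is contained (componentwise) in S. -/
/-! Each step of `R₁ ∪ R₂` is a `⊏`-step, so by the transitivity of `⊏` off the diagonal,
`(R₁ ∪ R₂)*` lies in `⊏ ∪ id`. The mixed transitivity law then absorbs the `⊏`-segments around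
the `R₁`-step of a `◊`-chain into `≺`; everything else is transitivity of `(R₁ ∪ R₂)*`, and
`P ⊆ Q` holds because `≺ ⊆ ⊏` is irreflexive. -/

open Relation

section StratifiedOrder

variable {X : Type*} {prec wk U : X → X → Prop}

theorem Relation.ReflTransGen.eq_or_of_le (hU : ∀ a b, U a b → wk a b)
    (hwk : ∀ a b c, wk a b → wk b c → a ≠ c → wk a c) {a b : X} (h : ReflTransGen U a b) :
    a = b ∨ wk a b := by
  induction h with
  | refl => exact Or.inl rfl
  | @tail b c _ hbc ih =>
    by_cases hac : a = c
    · exact Or.inl hac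
    · rcases ih with rfl | hab
      · exact Or.inr (hU _ _ hbc)
      · exact Or.inr (hwk _ _ _ hab (hU _ _ hbc) hac)

theorem prec_of_reflTransGen_prec_reflTransGen (hU : ∀ a b, U a b → wk a b)
    (hwk : ∀ a b c, wk a b → wk b c → a ≠ c → wk a c)
    (hmix : ∀ a b c, (wk a b ∧ prec b c) ∨ (prec a b ∧ wk b c) → prec a c) {a x y b : X}
    (hax : ReflTransGen U a x) (hxy : prec x y) (hyb : ReflTransGen U y b) : prec a b := by
  have hay : prec a y := by
    rcases hax.eq_or_of_le hU hwk with rfl | hax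
    · exact hxy
    · exact hmix _ _ _ (Or.inl ⟨hax, hxy⟩)
  rcases hyb.eq_or_of_le hU hwk with rfl | hyb
  · exact hay
  · exact hmix _ _ _ (Or.inr ⟨hay, hyb⟩)

end StratifiedOrder

/-- If `S=(X,≺,⊏)` is a stratified order structure and `R₁ ⊆ ≺`, `R₂ ⊆ ⊏`, then the
◊-closure of `(X,R₁,R₂)` is a stratified order structure contained in `S`. -/
theorem diamond_closure_mono_sos {X : Type*} (prec wk R1 R2 : X → X → Prop)
    (hS1 : ∀ a, ¬ wk a a)
    (hS2 : ∀ a b, prec a b → wk a b)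
    (hS3 : ∀ a b c, wk a b → wk b c → a ≠ c → wk a c)
    (hS4 : ∀ a b c, (wk a b ∧ prec b c) ∨ (prec a b ∧ wk b c) → prec a c)
    (h1 : ∀ a b, R1 a b → prec a b)
    (h2 : ∀ a b, R2 a b → wk a b) :
    (let U : X → X → Prop := fun a b => R1 a b ∨ R2 a b
     let P : X → X → Prop := Relation.Comp (Relation.Comp (Relation.ReflTransGen U) R1) (Relation.ReflTransGen U)
     let Q : X → X → Prop := fun a b => Relation.ReflTransGen U a b ∧ a ≠ b
     ((∀ a, ¬ Q a a) ∧
      (∀ a b, P a b → Q a b) ∧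
      (∀ a b c, Q a b → Q b c → a ≠ c → Q a c) ∧
      (∀ a b c, (Q a b ∧ P b c) ∨ (P a b ∧ Q b c) → P a c)) ∧
     (∀ a b, P a b → prec a b) ∧ (∀ a b, Q a b → wk a b)) := by
  intro U P Q
  have hU : ∀ a b, U a b → wk a b := by
    rintro a b (h | h)
    exacts [hS2 a b (h1 a b h), h2 a b h]
  have hP : ∀ a b, P a b → prec a b := by
    rintro a b ⟨y, ⟨x, hax, hxy⟩, hyb⟩
    exact prec_of_reflTransGen_prec_reflTransGen hU hS3 hS4 hax (h1 x y hxy) hyb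
  refine ⟨⟨fun a h => h.2 rfl, ?_, ?_, ?_⟩, hP, ?_⟩
  · intro a b hab
    obtain ⟨y, ⟨x, hax, hxy⟩, hyb⟩ := id hab
    refine ⟨hax.trans ((ReflTransGen.single (r := U) (Or.inl hxy)).trans hyb), ?_⟩
    rintro rfl
    exact hS1 a (hS2 a a (hP a a hab))
  · exact fun a b c hab hbc hac => ⟨hab.1.trans hbc.1, hac⟩
  · rintro a b c (⟨⟨hab, -⟩, y, ⟨x, hbx, hxy⟩, hyc⟩ | ⟨⟨y, ⟨x, hax, hxy⟩, hyb⟩, hbc, -⟩)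
    exacts [⟨y, ⟨x, hab.trans hbx, hxy⟩, hyc⟩, ⟨y, ⟨x, hax, hxy⟩, hyb.trans hbc⟩]
  · rintro a b ⟨hab, hne⟩
    exact (hab.eq_or_of_le hU hS3).resolve_left hne
end

section
/- Let (X,≺,⊏) be a stratified order structure satisfying the Szpilrajn-type property, and let ≡_⊏ be the ⊏-cycle equivalence (α ≡_⊏ β iff α = β or α ⊏ β ⊏ α). Then for all α, β ∈ X: [α] = [β] (i.e., α ≡_⊏ β) if and only if every stratified extension ◁ of S makes α and β incomparable (α ≃_◁ β). -/
def IsStratifiedOrder {X : Type*} (lt : X → X → Prop) : Prop :=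
  (∀ a, ¬ lt a a) ∧ (∀ a b c, lt a b → lt b c → lt a c) ∧
    Equivalence (fun a b => ¬ lt a b ∧ ¬ lt b a)

def frownCl {X : Type*} (lt : X → X → Prop) (a b : X) : Prop :=
  lt a b ∨ ((¬ lt a b ∧ ¬ lt b a) ∧ a ≠ b)

def InExt {X : Type*} (prec wk lt : X → X → Prop) : Prop :=
  IsStratifiedOrder lt ∧ (∀ a b, prec a b → lt a b) ∧ (∀ a b, wk a b → frownCl lt a b)

/-!
A `⊏`-cycle `α ⊏ β ⊏ α` puts `α ◁⌢ β` and `β ◁⌢ α` in every extension `◁`, which for a strict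
order leaves only incomparability. Conversely, if distinct `α, β` are incomparable in every
extension then `α ◁⌢ β` and `β ◁⌢ α` hold throughout, so the Szpilrajn property `⊏ = ⋂ ◁⌢`
gives `α ⊏ β ⊏ α`.
-/

theorem IsStratifiedOrder.not_lt_of_frownCl {X : Type*} {lt : X → X → Prop}
    (hlt : IsStratifiedOrder lt) {a b : X} (hba : frownCl lt b a) : ¬ lt a b := by
  intro hab
  rcases hba with hba | ⟨⟨_, hab'⟩, -⟩
  · exact hlt.1 a (hlt.2.1 a b a hab hba)
  · exact hab' hab

theorem InExt.incomparable_of_wk_of_wk {X : Type*} {prec wk lt : X → X → Prop}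
    (hlt : InExt prec wk lt) {a b : X} (hab : wk a b) (hba : wk b a) :
    ¬ lt a b ∧ ¬ lt b a :=
  ⟨hlt.1.not_lt_of_frownCl (hlt.2.2 b a hba), hlt.1.not_lt_of_frownCl (hlt.2.2 a b hab)⟩

theorem cycle_class_iff_always_incomparable_general {X : Type*} (prec wk : X → X → Prop)
    (hszpwk : ∀ a b, wk a b ↔ ∀ lt, InExt prec wk lt → frownCl lt a b) :
    ∀ a b, (a = b ∨ (wk a b ∧ wk b a)) ↔
      (∀ lt, InExt prec wk lt → ¬ lt a b ∧ ¬ lt b a) := by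
  intro a b
  constructor
  · rintro (rfl | ⟨hab, hba⟩) lt hlt
    · exact ⟨hlt.1.1 a, hlt.1.1 a⟩
    · exact hlt.incomparable_of_wk_of_wk hab hba
  · intro hinc
    by_cases hne : a = b
    · exact Or.inl hne
    · exact Or.inr ⟨(hszpwk a b).2 fun lt hlt => Or.inr ⟨hinc lt hlt, hne⟩,
        (hszpwk b a).2 fun lt hlt => Or.inr ⟨(hinc lt hlt).symm, Ne.symm hne⟩⟩

/-- `[α] = [β]` (⊏-cycle equivalence) iff `α` and `β` are incomparable in every
stratified extension. -/
theorem cycle_class_iff_always_incomparable {X : Type*} (prec wk : X → X → Prop)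
    (hS1 : ∀ a, ¬ wk a a) (hS2 : ∀ a b, prec a b → wk a b)
    (hS3 : ∀ a b c, wk a b → wk b c → a ≠ c → wk a c)
    (hS4 : ∀ a b c, (wk a b ∧ prec b c) ∨ (prec a b ∧ wk b c) → prec a c)
    (hszpprec : ∀ a b, prec a b ↔ ∀ lt, InExt prec wk lt → lt a b)
    (hszpwk : ∀ a b, wk a b ↔ ∀ lt, InExt prec wk lt → frownCl lt a b) :
    ∀ a b, (a = b ∨ (wk a b ∧ wk b a)) ↔
      (∀ lt, InExt prec wk lt → ¬ lt a b ∧ ¬ lt b a) :=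
  cycle_class_iff_always_incomparable_general prec wk hszpwk
end
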